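/- arXiv:1703.09863 — 2 statements merged into one kernel-verified Lean document; each statement's English description precedes it below -/
import Mathlib

section
/- Let s_λ denote the unique small solution of s²·ln(R/s) = 2a/λ̄ with λ̄ = 4πλ/ln λ. Then s_λ = (√a / √(πλ)) · (1 + O(ln ln λ / ln λ)) as λ → ∞; that is, there exist constants C, λ₀ > 0 such that for λ ≥ λ₀, |s_λ · √(πλ)/√a − 1| ≤ C · ln ln λ / ln λ. -/
/-!
With `g = log l` and `u = π l s² / a` (the square of the normalised quantity), the defining
equation becomes the fixed-point relation `u (g + c - log u) = g` with `c = log (π R² / a)`,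
i.e. `(u - 1) g = u (log u - c)`. The constraint `s < R / √e` forces `u < g`, which together with
`log g = o(g)` keeps `u ≤ 2`; then `u |log u - c|` is bounded, so `|u - 1| = O(1 / log l)`,
which is even better than the claimed `O(log log l / log l)`.
-/

open Real Filter

lemma abs_sub_one_le_abs_sq_sub_one {t : ℝ} (ht : 0 ≤ t) : |t - 1| ≤ |t ^ 2 - 1| := by
  rw [show t ^ 2 - 1 = (t - 1) * (t + 1) by ring, abs_mul,
    abs_of_pos (by linarith : (0 : ℝ) < t + 1)]
  nlinarith [abs_nonneg (t - 1)]

lemma mul_abs_log_le_two {u : ℝ} (hu : 0 < u) (hu2 : u ≤ 2) : u * |log u| ≤ 2 := by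
  rcases le_total u 1 with hu1 | hu1
  · have := abs_log_mul_self_lt u hu hu1
    rw [abs_mul, abs_of_pos hu] at this
    linarith
  · rw [abs_of_nonneg (log_nonneg hu1)]
    nlinarith [log_le_sub_one_of_pos hu]

lemma eventually_log_sub_le_half (c : ℝ) :
    ∀ᶠ g in atTop, 1 ≤ log g ∧ log g - c ≤ g / 2 := by
  filter_upwards [tendsto_log_atTop.eventually_ge_atTop 1,
    isLittleO_log_id_atTop.bound (by norm_num : (0 : ℝ) < 1 / 4),
    eventually_ge_atTop (-4 * c), eventually_ge_atTop 0] with g hlog hlittle hc hg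
  rw [norm_eq_abs, id, norm_of_nonneg hg] at hlittle
  exact ⟨hlog, by linarith [le_abs_self (log g)]⟩

section FixedPoint

variable {u g c : ℝ}

lemma le_two_of_mul_add_sub_log_eq (hu : 0 < u) (hug : u ≤ g) (hg : log g - c ≤ g / 2)
    (h : u * (g + c - log u) = g) : u ≤ 2 := by
  have hfactor : g / 2 ≤ g + c - log u := by linarith [log_le_log hu hug]
  nlinarith

lemma abs_sub_one_mul_le_of_mul_add_sub_log_eq (hu : 0 < u) (hu2 : u ≤ 2)
    (h : u * (g + c - log u) = g) : |u - 1| * g ≤ 2 + 2 * |c| := by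
  have hfix : (u - 1) * g = u * (log u - c) := by linear_combination h
  calc |u - 1| * g ≤ |(u - 1) * g| := by
        rw [abs_mul]; exact mul_le_mul_of_nonneg_left (le_abs_self g) (abs_nonneg _)
    _ = u * |log u - c| := by rw [hfix, abs_mul, abs_of_pos hu]
    _ ≤ u * |log u| + u * |c| := by rw [← mul_add]; gcongr; exact abs_sub _ _
    _ ≤ 2 + 2 * |c| := by gcongr; exact mul_abs_log_le_two hu hu2

end FixedPoint

lemma scaled_sq_lt_log_and_fixed_point {R a l σ : ℝ} (hR : 0 < R) (ha : 0 < a) (hl : 0 < l)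
    (hσ : σ ∈ Set.Ioo 0 (R / exp (1 / 2)))
    (heq : σ ^ 2 * log (R / σ) = 2 * a / (4 * π * l / log l)) :
    π * l * σ ^ 2 / a < log l ∧
      π * l * σ ^ 2 / a * (log l + log (π * R ^ 2 / a) - log (π * l * σ ^ 2 / a)) = log l := by
  obtain ⟨hσ0, hσR⟩ := hσ
  have hu : 0 < π * l * σ ^ 2 / a := by positivity
  have hlog : 2 * log (R / σ) = log l + log (π * R ^ 2 / a) - log (π * l * σ ^ 2 / a) := by
    rw [← log_rpow (by positivity), ← log_mul (by positivity) (by positivity),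
      ← log_div (by positivity) hu.ne']
    congr 1
    norm_cast
    field_simp
  have hfix : π * l * σ ^ 2 / a * (2 * log (R / σ)) = log l := by
    rw [show π * l * σ ^ 2 / a * (2 * log (R / σ)) =
      2 * π * l / a * (σ ^ 2 * log (R / σ)) by ring, heq]
    field_simp
    ring
  have hlog_gt_one : 1 < 2 * log (R / σ) := by
    have := (lt_log_iff_exp_lt (by positivity)).mpr ((lt_div_comm₀ hσ0 (exp_pos _)).mp hσR)
    linarith
  rw [← hlog]
  exact ⟨by nlinarith, hfix⟩

theorem stmt4 (R a : ℝ) (hR : 0 < R) (ha : 0 < a) (s : ℝ → ℝ)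
    (hs : ∀ᶠ l in Filter.atTop,
      s l ∈ Set.Ioo 0 (R / Real.exp (1 / 2)) ∧
      (s l) ^ 2 * Real.log (R / s l) = 2 * a / (4 * Real.pi * l / Real.log l)) :
    ∃ C > (0 : ℝ), ∃ l₀ > (0 : ℝ), ∀ l ≥ l₀,
      |s l * Real.sqrt (Real.pi * l) / Real.sqrt a - 1| ≤
        C * Real.log (Real.log l) / Real.log l := by
  set c := log (π * R ^ 2 / a)
  obtain ⟨l₀, hl₀⟩ := eventually_atTop.mp <|
    hs.and (tendsto_log_atTop.eventually (eventually_log_sub_le_half c))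
  refine ⟨2 + 2 * |c|, by positivity, max l₀ 1, lt_max_of_lt_right one_pos, fun l hl => ?_⟩
  obtain ⟨⟨hsl, heq⟩, hloglog, hlogc⟩ := hl₀ l (le_of_max_le_left hl)
  have hl1 : 1 ≤ l := le_of_max_le_right hl
  obtain ⟨hug, hfix⟩ := scaled_sq_lt_log_and_fixed_point hR ha (by linarith) hsl heq
  have hs0 := hsl.1
  set u := π * l * s l ^ 2 / a
  have hu : 0 < u := by positivity
  have hg : 0 < log l := hu.trans hug
  have hsq : (s l * √(π * l) / √a) ^ 2 = u := by
    rw [div_pow, mul_pow, sq_sqrt (by positivity), sq_sqrt ha.le]; ring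
  calc |s l * √(π * l) / √a - 1| ≤ |u - 1| :=
        hsq ▸ abs_sub_one_le_abs_sq_sub_one (by positivity)
    _ ≤ (2 + 2 * |c|) / log l := by
        rw [le_div_iff₀ hg]
        exact abs_sub_one_mul_le_of_mul_add_sub_log_eq hu
          (le_two_of_mul_add_sub_log_eq hu hug.le hlogc hfix) hfix
    _ ≤ (2 + 2 * |c|) * log (log l) / log l := by
        gcongr; exact le_mul_of_one_le_right (by positivity) hloglog
end

section
/- Let S(y, x) = (1/2π)·ln(1/|y − x|) on ℝ² and let Q_θ(u, v) = −∫_{∂B_θ(x₀)} (∂v/∂ν)(∂u/∂x_i) − ∫_{∂B_θ(x₀)} (∂u/∂ν)(∂v/∂x_i) + ∫_{∂B_θ(x₀)} ⟨∇u, ∇v⟩ ν_i. Then for every θ > 0 and every i, h ∈ {1, 2}, Q_θ(S(x₀, ·), ∂_h S(x₀, ·)) = 0, where ∂_h denotes the partial derivative in the first argument. -/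
/-!
On the circle `|x - x₀| = θ` the gradient of `S(x₀, ·)` is radial, `∇S = -(2πθ)⁻¹ ν`.
Hence `∂_ν(∂_h S) ∂_i S = ⟨∇S, ∇∂_h S⟩ ν_i` pointwise, so the first and third integrals
cancel, and `∂_ν S` is constant, so the second integral is a multiple of `∫ ∂_i ∂_h S`.
Since `∂_i ∂_h S(x) = (δ_ih |x - x₀|² - 2 (x - x₀)_h (x - x₀)_i) / (2π |x - x₀|⁴)` is a
traceless quadratic form over `|x - x₀|⁴`, it changes sign under the quarter turn about `x₀`,
which preserves the circle and its arc-length (Hausdorff) measure; so that integral vanishes.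
-/

open Real Metric MeasureTheory

noncomputable abbrev E2 := EuclideanSpace ℝ (Fin 2)

/-- The fundamental solution `S(x₀, ·)` of `−Δ` in the plane. -/
noncomputable def Sfun (x₀ : E2) (x : E2) : ℝ := (1 / (2 * π)) * Real.log (1 / ‖x - x₀‖)

/-- `∂_h S(x₀, x) = (1/2π)·(x−x₀)_h/|x−x₀|²` (derivative in the first argument). -/
noncomputable def dSfun (x₀ : E2) (h : Fin 2) (x : E2) : ℝ :=
  (1 / (2 * π)) * (x h - x₀ h) / ‖x - x₀‖ ^ 2

open scoped RealInnerProductSpace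

theorem IsometryEquiv.setIntegral_hausdorffMeasure_eq_zero_of_odd {X : Type*} [EMetricSpace X]
    [MeasurableSpace X] [BorelSpace X]
    (T : X ≃ᵢ X) {s : Set X} (hs : MeasurableSet s) (hTs : T ⁻¹' s = s) {f : X → ℝ}
    (hf : ∀ x ∈ s, f (T x) = -f x) (d : ℝ) :
    ∫ x in s, f x ∂μH[d] = 0 := by
  have hpres : ∫ x in s, f (T x) ∂μH[d] = ∫ x in s, f x ∂μH[d] := by
    simpa only [hTs] using (T.measurePreserving_hausdorffMeasure d).setIntegral_preimage_emb
      T.toHomeomorph.measurableEmbedding f s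
  rw [setIntegral_congr_fun hs hf, integral_neg] at hpres
  linarith

theorem LinearIsometryEquiv.setIntegral_sphere_eq_zero_of_odd {E : Type*}
    [NormedAddCommGroup E] [NormedSpace ℝ E] [MeasurableSpace E] [BorelSpace E]
    (L : E ≃ₗᵢ[ℝ] E) (x₀ : E) (r : ℝ) {f : E → ℝ}
    (hf : ∀ x ∈ sphere x₀ r, f (x₀ + L (x - x₀)) = -f x) (d : ℝ) :
    ∫ x in sphere x₀ r, f x ∂μH[d] = 0 := by
  let T : E ≃ᵢ E := ((IsometryEquiv.subRight x₀).trans L.toIsometryEquiv).trans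
    (IsometryEquiv.addLeft x₀)
  have hT : ∀ x, T x = x₀ + L (x - x₀) := fun _ => rfl
  refine T.setIntegral_hausdorffMeasure_eq_zero_of_odd isClosed_sphere.measurableSet ?_
    (fun x hx => by rw [hT]; exact hf x hx) d
  ext x
  simp only [Set.mem_preimage, mem_sphere_iff_norm, hT, add_sub_cancel_left, L.norm_map]

theorem EuclideanSpace.sum_inner_single_mul {ι : Type*} [Fintype ι] [DecidableEq ι]
    (w : EuclideanSpace ℝ ι) (L : EuclideanSpace ℝ ι →L[ℝ] ℝ) :
    ∑ j, ⟪w, EuclideanSpace.single j 1⟫ * L (EuclideanSpace.single j 1) = L w := by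
  conv_rhs => rw [← (EuclideanSpace.basisFun ι ℝ).sum_repr w]
  simp [EuclideanSpace.inner_single_right, map_sum]

noncomputable def quarterTurn : E2 ≃ₗᵢ[ℝ] E2 :=
  (LinearIsometryEquiv.piLpCongrLeft 2 ℝ ℝ (Equiv.swap (0 : Fin 2) 1)).trans
    (LinearIsometryEquiv.piLpCongrRight 2 fun j =>
      if j = 0 then LinearIsometryEquiv.neg ℝ else LinearIsometryEquiv.refl ℝ ℝ)

@[simp] lemma quarterTurn_apply_zero (x : E2) : quarterTurn x 0 = -x 1 := by
  simp [quarterTurn, LinearIsometryEquiv.piLpCongrRight_apply]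

@[simp] lemma quarterTurn_apply_one (x : E2) : quarterTurn x 1 = x 0 := by
  simp [quarterTurn, LinearIsometryEquiv.piLpCongrRight_apply]

lemma hasFDerivAt_norm_sub_sq {E : Type*} [NormedAddCommGroup E] [InnerProductSpace ℝ E]
    (x₀ x : E) : HasFDerivAt (fun y => ‖y - x₀‖ ^ 2) (2 • innerSL ℝ (x - x₀)) x := by
  simpa using ((hasFDerivAt_id x).sub_const x₀).norm_sq

lemma fderiv_Sfun {x₀ x : E2} (hx : x ≠ x₀) :
    fderiv ℝ (Sfun x₀) x = (-(2 * π * ‖x - x₀‖ ^ 2)⁻¹) • innerSL ℝ (x - x₀) := by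
  have hr : ‖x - x₀‖ ^ 2 ≠ 0 := by simpa [sub_eq_zero] using hx
  have hS : Sfun x₀ = fun y => -(4 * π)⁻¹ * Real.log (‖y - x₀‖ ^ 2) := by
    funext y
    rw [Sfun, one_div ‖y - x₀‖, Real.log_inv, Real.log_pow]
    push_cast
    ring
  have hderiv := ((Real.hasDerivAt_log hr).comp_hasFDerivAt x
    (hasFDerivAt_norm_sub_sq x₀ x)).const_mul (-(4 * π)⁻¹)
  simp only [Function.comp_def] at hderiv
  rw [hS, hderiv.fderiv]
  ext v
  simp only [smul_apply, smul_eq_mul]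
  field_simp
  ring

lemma fderiv_dSfun_apply {x₀ x : E2} (h : Fin 2) (hx : x ≠ x₀) (v : E2) :
    fderiv ℝ (dSfun x₀ h) x v =
      (1 / (2 * π)) * (v h * ‖x - x₀‖ ^ 2 - 2 * (x h - x₀ h) * ⟪x - x₀, v⟫) / ‖x - x₀‖ ^ 4 := by
  have hr : ‖x - x₀‖ ^ 2 ≠ 0 := by simpa [sub_eq_zero] using hx
  have hnum : HasFDerivAt (fun y : E2 => (1 / (2 * π)) * (y h - x₀ h))
      ((1 / (2 * π)) • (EuclideanSpace.proj h : E2 →L[ℝ] ℝ)) x := by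
    simpa using (((EuclideanSpace.proj h : E2 →L[ℝ] ℝ).hasFDerivAt).sub_const (x₀ h)).const_mul
      (1 / (2 * π))
  have hd : dSfun x₀ h = fun y => (1 / (2 * π)) * (y h - x₀ h) * (‖y - x₀‖ ^ 2)⁻¹ := by
    funext y; rw [dSfun, div_eq_mul_inv]
  have hderiv := hnum.mul ((hasDerivAt_inv hr).comp_hasFDerivAt x (hasFDerivAt_norm_sub_sq x₀ x))
  simp only [Function.comp_def, Pi.mul_def] at hderiv
  rw [hd, hderiv.fderiv]
  simp only [add_apply, smul_apply, innerSL_apply_apply, PiLp.proj_apply, smul_eq_mul,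
    nsmul_eq_mul, Nat.cast_ofNat]
  field_simp
  ring

lemma fderiv_dSfun_quarterTurn {x₀ x : E2} (h i : Fin 2) (hx : x ≠ x₀) :
    fderiv ℝ (dSfun x₀ h) (x₀ + quarterTurn (x - x₀)) (EuclideanSpace.single i 1) =
      -fderiv ℝ (dSfun x₀ h) x (EuclideanSpace.single i 1) := by
  have hx' : x₀ + quarterTurn (x - x₀) ≠ x₀ := by simpa [sub_eq_zero] using hx
  rw [fderiv_dSfun_apply h hx, fderiv_dSfun_apply h hx', add_sub_cancel_left,
    quarterTurn.norm_map]
  have hr : ‖x - x₀‖ ^ 2 = (x 0 - x₀ 0) ^ 2 + (x 1 - x₀ 1) ^ 2 := by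
    simp [EuclideanSpace.norm_sq_eq, Fin.sum_univ_two]
  rw [hr]
  fin_cases h <;> fin_cases i <;>
    simp [EuclideanSpace.inner_single_right] <;> ring

lemma fderiv_Sfun_of_mem_sphere {x₀ x : E2} {θ : ℝ} (hθ : θ ≠ 0) (hx : x ∈ sphere x₀ θ) :
    fderiv ℝ (Sfun x₀) x = (-(2 * π * θ)⁻¹) • innerSL ℝ (θ⁻¹ • (x - x₀)) := by
  rw [fderiv_Sfun (ne_of_mem_sphere hx hθ), mem_sphere_iff_norm.mp hx, map_smul, smul_smul]
  congr 1
  field_simp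

lemma fderiv_Sfun_normal_of_mem_sphere {x₀ x : E2} {θ : ℝ} (hθ : 0 < θ)
    (hx : x ∈ sphere x₀ θ) : fderiv ℝ (Sfun x₀) x (θ⁻¹ • (x - x₀)) = -(2 * π * θ)⁻¹ := by
  rw [fderiv_Sfun_of_mem_sphere hθ.ne' hx, smul_apply, innerSL_apply_apply,
    real_inner_self_eq_norm_sq, norm_smul, mem_sphere_iff_norm.mp hx,
    Real.norm_of_nonneg (inv_nonneg.mpr hθ.le), inv_mul_cancel₀ hθ.ne', one_pow, smul_eq_mul,
    mul_one]

lemma apply_normal_mul_fderiv_Sfun_of_mem_sphere {x₀ x : E2} {θ : ℝ} (hθ : θ ≠ 0)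
    (hx : x ∈ sphere x₀ θ) (L : E2 →L[ℝ] ℝ) (i : Fin 2) :
    L (θ⁻¹ • (x - x₀)) * fderiv ℝ (Sfun x₀) x (EuclideanSpace.single i 1) =
      (∑ j, fderiv ℝ (Sfun x₀) x (EuclideanSpace.single j 1) * L (EuclideanSpace.single j 1))
        * (θ⁻¹ * (x i - x₀ i)) := by
  have hνi : ⟪θ⁻¹ • (x - x₀), EuclideanSpace.single i 1⟫ = θ⁻¹ * (x i - x₀ i) := by
    simp [EuclideanSpace.inner_single_right]
  simp only [fderiv_Sfun_of_mem_sphere hθ hx, smul_apply, innerSL_apply_apply, smul_eq_mul,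
    mul_assoc, ← Finset.mul_sum]
  rw [EuclideanSpace.sum_inner_single_mul, hνi]
  ring

theorem stmt7 (x₀ : E2) (θ : ℝ) (hθ : 0 < θ) (i h : Fin 2) :
    -(∫ x in sphere x₀ θ,
        (fderiv ℝ (dSfun x₀ h) x (θ⁻¹ • (x - x₀)))
          * (fderiv ℝ (Sfun x₀) x (EuclideanSpace.single i 1)) ∂μH[1])
      - (∫ x in sphere x₀ θ,
          (fderiv ℝ (Sfun x₀) x (θ⁻¹ • (x - x₀)))
            * (fderiv ℝ (dSfun x₀ h) x (EuclideanSpace.single i 1)) ∂μH[1])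
      + (∫ x in sphere x₀ θ,
          (∑ j : Fin 2, (fderiv ℝ (Sfun x₀) x (EuclideanSpace.single j 1))
            * (fderiv ℝ (dSfun x₀ h) x (EuclideanSpace.single j 1)))
            * (θ⁻¹ * (x i - x₀ i)) ∂μH[1])
    = 0 := by
  rw [setIntegral_congr_fun isClosed_sphere.measurableSet fun x hx =>
      apply_normal_mul_fderiv_Sfun_of_mem_sphere hθ.ne' hx (fderiv ℝ (dSfun x₀ h) x) i,
    setIntegral_congr_fun isClosed_sphere.measurableSet fun x hx =>
      congrArg (· * fderiv ℝ (dSfun x₀ h) x (EuclideanSpace.single i 1))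
        (fderiv_Sfun_normal_of_mem_sphere hθ hx),
    integral_const_mul, quarterTurn.setIntegral_sphere_eq_zero_of_odd x₀ θ
      (f := fun x => fderiv ℝ (dSfun x₀ h) x (EuclideanSpace.single i 1))
      (fun x hx => fderiv_dSfun_quarterTurn h i (ne_of_mem_sphere hx hθ.ne')) 1]
  ring
end
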